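/- Let A be a finite connected subset of ℤ² and let R be the smallest axis-aligned lattice rectangle containing A. Then |∂*R| ≤ 3|∂*A|, where ∂* denotes the outer vertex boundary. -/

import Mathlib

/-- Nearest-neighbour adjacency on `ℤ^d`. -/
def latAdj {d : ℕ} (x y : Fin d → ℤ) : Prop := (∑ i, |x i - y i|) = 1

/-- The unbounded (infinite) connected component of the complement of `A`:
points outside `A` whose connected component in the complement is infinite. -/
def extComp {d : ℕ} (A : Set (Fin d → ℤ)) : Set (Fin d → ℤ) :=
  {y | y ∉ A ∧
    {z | Relation.ReflTransGen (fun u v => latAdj u v ∧ u ∉ A ∧ v ∉ A) y z}.Infinite}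

/-- The outer vertex boundary `∂*A`: points of `A` adjacent to the unbounded
component of the complement. -/
def outerVB {d : ℕ} (A : Set (Fin d → ℤ)) : Set (Fin d → ℤ) :=
  {x | x ∈ A ∧ ∃ y ∈ extComp A, latAdj x y}

/-- The outer edge boundary `∂*_e A`: edges `(x,y)` with `x ∈ A` and `y` in the
unbounded component of the complement. -/
def outerEB {d : ℕ} (A : Set (Fin d → ℤ)) : Set ((Fin d → ℤ) × (Fin d → ℤ)) :=
  {e | e.1 ∈ A ∧ e.2 ∈ extComp A ∧ latAdj e.1 e.2}

/-- `A` is connected with respect to nearest-neighbour adjacency. -/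
def ConnSet {d : ℕ} (A : Set (Fin d → ℤ)) : Prop :=
  ∀ x ∈ A, ∀ y ∈ A, Relation.ReflTransGen (fun u v => latAdj u v ∧ u ∈ A ∧ v ∈ A) x y

/-- An axis-aligned lattice box (rectangle when `d = 2`). -/
def IsBox {d : ℕ} (R : Set (Fin d → ℤ)) : Prop :=
  ∃ a b : Fin d → ℤ, R = {x | ∀ i, a i ≤ x i ∧ x i ≤ b i}

/-- The projection of `A` onto the hyperplane orthogonal to the `i`-th coordinate. -/
def latProj {d : ℕ} (A : Set (Fin d → ℤ)) (i : Fin d) : Set (Fin d → ℤ) :=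
  (fun x => Function.update x i 0) '' A

/-!
Let `R = [a, b]` be the bounding box of `A`. Every vertex of `∂*R` carries an outer edge of `R`,
so `|∂*R| ≤ |∂*_e R|`. An outer edge of `R` in direction `±eᵢ` sits on an axis line that meets
`A`, by a discrete intermediate value argument along paths in `A`; the point of `A` on that line
that is extremal in direction `±eᵢ` carries an outer edge of `A` in the same direction, and this
is an injection `∂*_e R → ∂*_e A`. Finally, if `A` has two points, each of its vertices has a
neighbour in `A` and hence at most `3` outer edges, so `|∂*_e A| ≤ 3 |∂*A|`. If `A` is a single
point then `R = A`.
-/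

variable {d : ℕ}

def axisLine (x : Fin d → ℤ) (i : Fin d) : Set (Fin d → ℤ) := {z | ∀ j ≠ i, z j = x j}

lemma latAdj_add_single (x : Fin d → ℤ) (i : Fin d) (u : ℤˣ) :
    latAdj x (x + Pi.single i (u : ℤ)) := by
  unfold latAdj
  rw [Finset.sum_eq_single i (fun j _ hj => by simp [hj]) (by simp)]
  simpa using Int.isUnit_iff_abs_eq.1 u.isUnit

lemma latAdj_iff_exists_eq_add_single {x y : Fin d → ℤ} :
    latAdj x y ↔ ∃ (i : Fin d) (u : ℤˣ), y = x + Pi.single i (u : ℤ) := by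
  refine ⟨fun h => ?_, fun ⟨i, u, hy⟩ => hy ▸ latAdj_add_single x i u⟩
  unfold latAdj at h
  obtain ⟨i, hi⟩ : ∃ i, x i - y i ≠ 0 := by
    by_contra! h0
    rw [Finset.sum_eq_zero fun j _ => by rw [h0 j, abs_zero]] at h
    exact zero_ne_one h
  have hsplit : |x i - y i| + ∑ j ∈ Finset.univ.erase i, |x j - y j| = ∑ j, |x j - y j| :=
    Finset.add_sum_erase _ (fun j => |x j - y j|) (Finset.mem_univ i)
  have hrest_nonneg : 0 ≤ ∑ j ∈ Finset.univ.erase i, |x j - y j| :=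
    Finset.sum_nonneg fun j _ => abs_nonneg _
  have hi_one := Int.one_le_abs hi
  have hrest : ∀ j ∈ Finset.univ.erase i, |x j - y j| = 0 :=
    (Finset.sum_eq_zero_iff_of_nonneg fun j _ => abs_nonneg _).1 (by linarith)
  have hunit : IsUnit (y i - x i) := Int.isUnit_iff_abs_eq.2 (by rw [abs_sub_comm]; linarith)
  refine ⟨i, hunit.unit, funext fun j => ?_⟩
  by_cases hj : j = i
  · subst hj; simp
  · have := abs_eq_zero.1 (hrest j (Finset.mem_erase.2 ⟨hj, Finset.mem_univ j⟩))
    simp only [IsUnit.unit_spec, Pi.add_apply, Pi.single_eq_of_ne hj, add_zero]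
    omega

lemma abs_sub_apply_le_one_of_latAdj {x y : Fin d → ℤ} (h : latAdj x y) (j : Fin d) :
    |x j - y j| ≤ 1 :=
  (Finset.single_le_sum (fun k _ => abs_nonneg (x k - y k)) (Finset.mem_univ j)).trans h.le

lemma mem_extComp_of_ray {S : Set (Fin d → ℤ)} {y : Fin d → ℤ} {i : Fin d} {u : ℤˣ}
    (h : ∀ t : ℕ, y + Pi.single i ((t : ℤ) * u) ∉ S) : y ∈ extComp S := by
  refine ⟨by simpa using h 0, Set.infinite_of_injective_forall_mem
    (f := fun t : ℕ => y + Pi.single i ((t : ℤ) * u)) (fun t t' htt' => ?_) fun t => ?_⟩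
  · have := congrFun htt' i
    simp only [Pi.add_apply, Pi.single_eq_same, add_right_inj] at this
    exact_mod_cast mul_right_cancel₀ u.ne_zero this
  · induction t with
    | zero => simpa using Relation.ReflTransGen.refl
    | succ t ih =>
      have hstep : y + Pi.single i (((t + 1 : ℕ) : ℤ) * u)
          = y + Pi.single i ((t : ℤ) * u) + Pi.single i (u : ℤ) := by
        rw [add_assoc, ← Pi.single_add]; push_cast; ring_nf
      refine ih.tail ⟨?_, h t, h (t + 1)⟩
      rw [hstep]
      exact latAdj_add_single _ i u

/-- The point of `A` on the line that is extremal in direction `u • eᵢ`: the ray beyond it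
misses `A`. -/
lemma exists_mem_outerEB_of_mem_axisLine {A : Set (Fin d → ℤ)} (hA : A.Finite)
    {x : Fin d → ℤ} {i : Fin d} (hx : (A ∩ axisLine x i).Nonempty) (u : ℤˣ) :
    ∃ z ∈ axisLine x i, (z, z + Pi.single i (u : ℤ)) ∈ outerEB A := by
  obtain ⟨z, ⟨hzA, hzL⟩, hmax⟩ :=
    Set.exists_max_image _ (fun z => (u : ℤ) * z i) (hA.subset Set.inter_subset_left) hx
  refine ⟨z, hzL, hzA, mem_extComp_of_ray (i := i) (u := u) fun t hmem => ?_,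
    latAdj_add_single z i u⟩
  have hline : z + Pi.single i (u : ℤ) + Pi.single i ((t : ℤ) * u) ∈ axisLine x i :=
    fun j hj => by simp [hj, hzL j hj]
  have hle := hmax _ ⟨hmem, hline⟩
  have huu : (u : ℤ) * u = 1 := by rw [← Units.val_mul, Int.units_mul_self, Units.val_one]
  simp only [Pi.add_apply, Pi.single_eq_same] at hle
  nlinarith

def latNbrs (x : Fin d → ℤ) : Finset (Fin d → ℤ) :=
  Finset.univ.image fun p : Fin d × ℤˣ => x + Pi.single p.1 (p.2 : ℤ)

lemma mem_latNbrs {x y : Fin d → ℤ} : y ∈ latNbrs x ↔ latAdj x y := by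
  simp [latNbrs, latAdj_iff_exists_eq_add_single, eq_comm]

lemma card_latNbrs_le (x : Fin d → ℤ) : (latNbrs x).card ≤ 2 * d := by
  calc (latNbrs x).card ≤ Fintype.card (Fin d × ℤˣ) := Finset.card_image_le
    _ = 2 * d := by simp [Fintype.card_units_int, mul_comm]

lemma outerEB_subset_prod (S : Set (Fin d → ℤ)) :
    outerEB S ⊆ S ×ˢ ⋃ x ∈ S, (latNbrs x : Set (Fin d → ℤ)) :=
  fun _ ⟨hx, _, hadj⟩ => ⟨hx, Set.mem_biUnion hx (mem_latNbrs.2 hadj)⟩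

lemma finite_outerEB {S : Set (Fin d → ℤ)} (hS : S.Finite) : (outerEB S).Finite :=
  (hS.prod (hS.biUnion fun x _ => (latNbrs x).finite_toSet)).subset (outerEB_subset_prod S)

lemma outerVB_eq_image_fst (S : Set (Fin d → ℤ)) : outerVB S = Prod.fst '' outerEB S := by
  ext x
  simp [outerVB, outerEB]

lemma ncard_outerVB_le_ncard_outerEB {S : Set (Fin d → ℤ)} (hS : S.Finite) :
    (outerVB S).ncard ≤ (outerEB S).ncard := by
  rw [outerVB_eq_image_fst]
  exact Set.ncard_image_le (finite_outerEB hS)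

/-- Of the `2d` neighbours of a vertex of `∂*A`, one lies in `A`, so at most `2d - 1` carry an
outer edge. -/
lemma ncard_outerEB_le {A : Set (Fin d → ℤ)} (hA : A.Finite)
    (hnbr : ∀ x ∈ A, ∃ y ∈ A, latAdj x y) :
    (outerEB A).ncard ≤ (2 * d - 1) * (outerVB A).ncard := by
  classical
  have hVB : (outerVB A).Finite := hA.subset fun _ hx => hx.1
  set B := hVB.toFinset with hB
  have hcover : outerEB A ⊆ ↑(B.biUnion fun x => {x} ×ˢ (latNbrs x).filter (· ∉ A)) := by
    rintro ⟨x, y⟩ ⟨hx, hy, hxy⟩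
    simp only [Finset.coe_biUnion, Set.mem_iUnion, Finset.mem_coe, hB, Set.Finite.mem_toFinset]
    exact ⟨x, ⟨hx, y, hy, hxy⟩, by simp [mem_latNbrs.2 hxy, hy.1]⟩
  have hfiber : ∀ x ∈ B, ({x} ×ˢ (latNbrs x).filter (· ∉ A)).card ≤ 2 * d - 1 := by
    intro x hx
    obtain ⟨y, hyA, hxy⟩ := hnbr x (hVB.mem_toFinset.1 hx).1
    have hlt : ((latNbrs x).filter (· ∉ A)).card < (latNbrs x).card :=
      Finset.card_lt_card (Finset.filter_ssubset.2 ⟨y, mem_latNbrs.2 hxy, not_not.2 hyA⟩)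
    have := card_latNbrs_le x
    rw [Finset.card_product, Finset.card_singleton, one_mul]
    omega
  calc (outerEB A).ncard
      ≤ (B.biUnion fun x => {x} ×ˢ (latNbrs x).filter (· ∉ A)).card := by
        rw [← Set.ncard_coe_finset]; exact Set.ncard_le_ncard hcover (Finset.finite_toSet _)
    _ ≤ ∑ x ∈ B, ({x} ×ˢ (latNbrs x).filter (· ∉ A)).card := Finset.card_biUnion_le
    _ ≤ B.card • (2 * d - 1) := Finset.sum_le_card_nsmul _ _ _ hfiber
    _ = (2 * d - 1) * (outerVB A).ncard := by
        rw [smul_eq_mul, mul_comm, Set.ncard_eq_toFinset_card _ hVB]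

lemma isBox_iff {R : Set (Fin d → ℤ)} : IsBox R ↔ ∃ a b, R = Set.Icc a b := by
  simp only [IsBox, Set.Icc, Pi.le_def, ← forall_and]

/-- An outer edge of a box leaves it through the face that its direction points to. -/
lemma apply_eq_of_mem_outerEB_Icc {a b x y : Fin d → ℤ} (he : (x, y) ∈ outerEB (Set.Icc a b))
    {j : Fin d} (hj : x j ≠ y j) : x j = if x j < y j then b j else a j := by
  obtain ⟨hx, hy, hxy⟩ : x ∈ Set.Icc a b ∧ y ∈ extComp (Set.Icc a b) ∧ latAdj x y := he
  obtain ⟨i, u, rfl⟩ := latAdj_iff_exists_eq_add_single.1 hxy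
  have hji : j = i := by by_contra h; simp [h] at hj
  subst hji
  have hout : x j + u < a j ∨ b j < x j + u := by
    by_contra! hin
    refine hy.1 ⟨fun k => ?_, fun k => ?_⟩ <;> by_cases hk : k = j <;>
      simp_all [hx.1 k, hx.2 k]
  have hxj : a j ≤ x j ∧ x j ≤ b j := ⟨hx.1 j, hx.2 j⟩
  simp only [Pi.add_apply, Pi.single_eq_same] at hout ⊢
  rcases Int.units_eq_one_or u with rfl | rfl <;>
    simp only [Units.val_one, Units.val_neg] at hout ⊢ <;> split_ifs <;> omega

lemma ncard_outerEB_Icc_le {A : Set (Fin d → ℤ)} (hA : A.Finite) {a b : Fin d → ℤ}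
    (hline : ∀ x ∈ Set.Icc a b, ∀ i, (A ∩ axisLine x i).Nonempty) :
    (outerEB (Set.Icc a b)).ncard ≤ (outerEB A).ncard := by
  have key : ∀ e ∈ outerEB (Set.Icc a b), ∃ z, (z, z + (e.2 - e.1)) ∈ outerEB A ∧
      ∀ j, e.1 j = e.2 j → z j = e.1 j := by
    rintro ⟨x, y⟩ ⟨hx, -, hxy⟩
    dsimp only at hx hxy ⊢
    obtain ⟨i, u, rfl⟩ := latAdj_iff_exists_eq_add_single.1 hxy
    obtain ⟨z, hzL, hz⟩ := exists_mem_outerEB_of_mem_axisLine hA (hline x hx i) u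
    refine ⟨z, by simpa using hz, fun j hj => hzL j fun hji => ?_⟩
    subst hji
    simp [u.ne_zero] at hj
  choose! f hfA hfL using key
  refine Set.ncard_le_ncard_of_injOn (fun e => (f e, f e + (e.2 - e.1))) hfA ?_ (finite_outerEB hA)
  rintro ⟨x, y⟩ he ⟨x', y'⟩ he' heq
  obtain ⟨hf, hdiff⟩ := Prod.mk.inj heq
  rw [hf, add_right_inj] at hdiff
  have hx : x = x' := funext fun j => by
    have hdj := congrFun hdiff j
    simp only [Pi.sub_apply] at hdj
    by_cases hj : x j = y j
    · exact (hfL _ he j hj).symm.trans (hf ▸ hfL _ he' j (show x' j = y' j by omega))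
    · rw [apply_eq_of_mem_outerEB_Icc he hj, apply_eq_of_mem_outerEB_Icc he' (by omega)]
      split_ifs <;> omega
  subst hx
  simpa using hdiff

/-- Discrete intermediate value property: a coordinate changes by at most one along each step
of a path in `A`. -/
lemma ConnSet.exists_apply_eq {A : Set (Fin d → ℤ)} (hconn : ConnSet A) {p q : Fin d → ℤ}
    (hp : p ∈ A) (hq : q ∈ A) {j : Fin d} {c : ℤ} (hpc : p j ≤ c) (hcq : c ≤ q j) :
    ∃ x ∈ A, x j = c := by
  suffices h : ∀ z, Relation.ReflTransGen (fun u v => latAdj u v ∧ u ∈ A ∧ v ∈ A) p z →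
      ∀ c, p j ≤ c → c ≤ z j → ∃ x ∈ A, x j = c from h q (hconn p hp q hq) c hpc hcq
  intro z hz
  induction hz with
  | refl => exact fun c h₁ h₂ => ⟨p, hp, le_antisymm h₁ h₂⟩
  | @tail u v _ huv ih =>
    intro c h₁ h₂
    by_cases hc : c ≤ u j
    · exact ih c h₁ hc
    · have := abs_le.1 (abs_sub_apply_le_one_of_latAdj huv.1 j)
      exact ⟨v, huv.2.2, by omega⟩

lemma ConnSet.exists_latAdj {A : Set (Fin d → ℤ)} (hconn : ConnSet A) (hA : A.Nontrivial) :
    ∀ x ∈ A, ∃ y ∈ A, latAdj x y := by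
  intro x hx
  obtain ⟨y, hy, hyx⟩ := hA.exists_ne x
  rcases (hconn x hx y hy).cases_head with rfl | ⟨z, hxz, -⟩
  · exact absurd rfl hyx
  · exact ⟨z, hxz.2.2, hxz.1⟩

lemma ConnSet.inter_axisLine_nonempty {A : Set (Fin 2 → ℤ)} (hconn : ConnSet A)
    {a b : Fin 2 → ℤ} (ha : ∀ j, ∃ p ∈ A, p j = a j) (hb : ∀ j, ∃ q ∈ A, q j = b j)
    {x : Fin 2 → ℤ} (hx : x ∈ Set.Icc a b) (i : Fin 2) : (A ∩ axisLine x i).Nonempty := by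
  obtain ⟨j, hj⟩ : ∃ j, ∀ k ≠ i, k = j := ⟨i.rev, fun k hk => by
    rw [Ne, Fin.ext_iff] at hk
    rw [Fin.ext_iff, Fin.val_rev]
    omega⟩
  obtain ⟨p, hp, hpj⟩ := ha j
  obtain ⟨q, hq, hqj⟩ := hb j
  obtain ⟨z, hz, hzj⟩ := hconn.exists_apply_eq hp hq (hpj ▸ hx.1 j) (hqj ▸ hx.2 j)
  exact ⟨z, hz, fun k hk => hj k hk ▸ hzj⟩

lemma Set.Finite.exists_subset_Icc_apply_eq {A : Set (Fin d → ℤ)} (hA : A.Finite)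
    (hne : A.Nonempty) : ∃ a b : Fin d → ℤ, A ⊆ Set.Icc a b ∧
      (∀ j, ∃ p ∈ A, p j = a j) ∧ (∀ j, ∃ q ∈ A, q j = b j) := by
  choose p hpA hpmin using fun j => Set.exists_min_image A (· j) hA hne
  choose q hqA hqmax using fun j => Set.exists_max_image A (· j) hA hne
  exact ⟨fun j => p j j, fun j => q j j,
    fun x hx => ⟨fun j => hpmin j x hx, fun j => hqmax j x hx⟩,
    fun j => ⟨p j, hpA j, rfl⟩, fun j => ⟨q j, hqA j, rfl⟩⟩

lemma eq_Icc_of_minimal_box {A R : Set (Fin d → ℤ)} (hbox : IsBox R) (hAR : A ⊆ R)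
    (hmin : ∀ R', IsBox R' → A ⊆ R' → R ⊆ R') {a b : Fin d → ℤ} (hAab : A ⊆ Set.Icc a b)
    (ha : ∀ j, ∃ p ∈ A, p j = a j) (hb : ∀ j, ∃ q ∈ A, q j = b j) : R = Set.Icc a b := by
  refine (hmin _ (isBox_iff.2 ⟨a, b, rfl⟩) hAab).antisymm ?_
  obtain ⟨a', b', rfl⟩ := isBox_iff.1 hbox
  refine Set.Icc_subset_Icc (fun j => ?_) (fun j => ?_)
  · obtain ⟨p, hp, hpj⟩ := ha j
    exact hpj ▸ (hAR hp).1 j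
  · obtain ⟨q, hq, hqj⟩ := hb j
    exact hqj ▸ (hAR hq).2 j

/-- If `R` is the smallest axis-aligned rectangle in `ℤ²` containing the finite
connected set `A`, then `|∂*R| ≤ 3 |∂*A|`. -/
theorem stmt_5 (A R : Set (Fin 2 → ℤ)) (hfin : A.Finite) (hne : A.Nonempty)
    (hconn : ConnSet A) (hbox : IsBox R) (hAR : A ⊆ R)
    (hmin : ∀ R' : Set (Fin 2 → ℤ), IsBox R' → A ⊆ R' → R ⊆ R') :
    (outerVB R).ncard ≤ 3 * (outerVB A).ncard := by
  obtain ⟨a, b, hAab, ha, hb⟩ := hfin.exists_subset_Icc_apply_eq hne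
  obtain rfl := eq_Icc_of_minimal_box hbox hAR hmin hAab ha hb
  rcases A.subsingleton_or_nontrivial with hA | hA
  · have hab : a = b := funext fun j => by
      obtain ⟨p, hp, hpj⟩ := ha j
      obtain ⟨q, hq, hqj⟩ := hb j
      rw [← hpj, ← hqj, hA hp hq]
    rw [← hab, Set.Icc_self] at hAab ⊢
    rw [← hne.subset_singleton_iff.1 hAab]
    omega
  · calc (outerVB (Set.Icc a b)).ncard
        ≤ (outerEB (Set.Icc a b)).ncard := ncard_outerVB_le_ncard_outerEB (Set.finite_Icc a b)
      _ ≤ (outerEB A).ncard :=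
        ncard_outerEB_Icc_le hfin fun x hx i => hconn.inter_axisLine_nonempty ha hb hx i
      _ ≤ (2 * 2 - 1) * (outerVB A).ncard := ncard_outerEB_le hfin (hconn.exists_latAdj hA)
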